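/- arXiv:1706.06776 — 10 statements merged into one kernel-verified Lean document; each statement's English description precedes it below -/
import Mathlib

section
/- For every integer n ≥ 2, the function G(t) = [F_{n-1}(F_n^{-1}(t))]^{n/(n-1)} is concave on [0, ∞), where F_m(t) = ∫_0^t r^{m-1}/(1-r^2)^m dr for t ∈ [0,1). -/
/-!
Write `k = n - 1`, `p = n / k` and `x = F_n⁻¹(t)`. Since `F_k' / F_n' = (1 - x²) / x`, the
derivative of `G` at `t > 0` is `p · ψ(x) ^ (1 / k)` with `ψ(x) = F_k(x) · ((1 - x²) / x) ^ k`,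
so `G` is concave as soon as `ψ` is decreasing on `(0, 1)`. The derivative of `ψ` has the sign of
`x ^ k / (k (1 + x²) (1 - x²) ^ (k - 1)) - F_k(x)`, and this lower bound for `F_k` holds because
the difference vanishes at `0` and has derivative `4 x ^ (k + 1) / (k (1 + x²)² (1 - x²) ^ k) ≥ 0`.
-/

open Real Set Filter Topology

theorem StrictMonoOn.image_Ici_eq_of_rightInvOn {f g : ℝ → ℝ} {a b : ℝ}
    (hf : StrictMonoOn f (Ico a b)) (hab : a < b) (hg : MapsTo g (Ici (f a)) (Ico a b))
    (hfg : RightInvOn g f (Ici (f a))) : g '' Ici (f a) = Ico a b := by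
  refine hg.image_subset.antisymm fun x hx => ?_
  have hfx : f x ∈ Ici (f a) := hf.monotoneOn (left_mem_Ico.2 hab) hx hx.1
  exact ⟨f x, hfx, hf.injOn (hg hfx) hx (hfg hfx)⟩

theorem StrictMonoOn.continuousOn_of_rightInvOn {f g : ℝ → ℝ} {a b : ℝ}
    (hf : StrictMonoOn f (Ico a b)) (hab : a < b) (hg : MapsTo g (Ici (f a)) (Ico a b))
    (hfg : RightInvOn g f (Ici (f a))) : ContinuousOn g (Ici (f a)) := by
  have hmono : MonotoneOn g (Ici (f a)) :=
    Function.monotoneOn_of_rightInvOn_of_mapsTo hf.monotoneOn hfg hg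
  have himage := hf.image_Ici_eq_of_rightInvOn hab hg hfg
  intro t ht
  rcases (mem_Ici.1 ht).eq_or_lt with rfl | hlt
  · have hga : g (f a) = a := hf.injOn (hg ht) (left_mem_Ico.2 hab) (hfg ht)
    refine continuousWithinAt_right_of_monotoneOn_of_image_mem_nhdsWithin hmono
      self_mem_nhdsWithin ?_
    rw [himage, hga]
    exact Ico_mem_nhdsGE hab
  · have hgt : a < g t := (hg ht).1.lt_of_ne fun h => hlt.ne (by rw [← hfg ht, ← h])
    refine (continuousAt_of_monotoneOn_of_image_mem_nhds hmono (Ici_mem_nhds hlt) ?_)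
      |>.continuousWithinAt
    rw [himage]
    exact Ico_mem_nhds hgt (hg ht).2

noncomputable def radialIntegral (m : ℕ) (t : ℝ) : ℝ :=
  ∫ r in (0 : ℝ)..t, r ^ (m - 1) / (1 - r ^ 2) ^ m

theorem radialIntegral_zero_right (m : ℕ) : radialIntegral m 0 = 0 := by
  simp [radialIntegral]

theorem hasDerivAt_radialIntegral (m : ℕ) {x : ℝ} (hx : x ∈ Ioo (-1) 1) :
    HasDerivAt (radialIntegral m) (x ^ (m - 1) / (1 - x ^ 2) ^ m) x := by
  have hcont : ContinuousOn (fun r : ℝ => r ^ (m - 1) / (1 - r ^ 2) ^ m) (Ioo (-1) 1) := by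
    refine ContinuousOn.div (by fun_prop) (by fun_prop) fun r hr => ?_
    have : 0 < 1 - r ^ 2 := by nlinarith [hr.1, hr.2]
    positivity
  have hsub : uIcc 0 x ⊆ Ioo (-1) 1 := ordConnected_Ioo.uIcc_subset (by norm_num) hx
  exact intervalIntegral.integral_hasDerivAt_right (hcont.mono hsub).intervalIntegrable
    (hcont.stronglyMeasurableAtFilter isOpen_Ioo x hx)
    (hcont.continuousAt (isOpen_Ioo.mem_nhds hx))

theorem continuousOn_radialIntegral (m : ℕ) : ContinuousOn (radialIntegral m) (Ioo (-1) 1) :=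
  fun _ hx => (hasDerivAt_radialIntegral m hx).continuousAt.continuousWithinAt

theorem strictMonoOn_radialIntegral (m : ℕ) : StrictMonoOn (radialIntegral m) (Ico 0 1) := by
  have hIco : Ico (0 : ℝ) 1 ⊆ Ioo (-1) 1 := Ico_subset_Ioo_left (by norm_num)
  refine strictMonoOn_of_hasDerivWithinAt_pos (convex_Ico 0 1)
    ((continuousOn_radialIntegral m).mono hIco)
    (fun x hx => (hasDerivAt_radialIntegral m (hIco (interior_subset hx))).hasDerivWithinAt)
    fun x hx => ?_
  rw [interior_Ico] at hx
  have : 0 < 1 - x ^ 2 := by nlinarith [hx.1, hx.2]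
  have := hx.1
  positivity

theorem radialIntegral_pos (m : ℕ) {x : ℝ} (hx : x ∈ Ioo 0 1) : 0 < radialIntegral m x := by
  simpa [radialIntegral_zero_right] using
    strictMonoOn_radialIntegral m (left_mem_Ico.2 one_pos) (Ioo_subset_Ico_self hx) hx.1

theorem le_radialIntegral_succ (m : ℕ) {x : ℝ} (hx : x ∈ Ico 0 1) :
    x ^ (m + 1) / ((m + 1) * (1 + x ^ 2) * (1 - x ^ 2) ^ m) ≤ radialIntegral (m + 1) x := by
  -- the bound with an extra factor `1 - y ^ 2` in numerator and denominator: its derivative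
  -- then involves no `m - 1`
  set B : ℝ → ℝ := fun y =>
    y ^ (m + 1) * (1 - y ^ 2) / ((m + 1) * (1 + y ^ 2) * (1 - y ^ 2) ^ (m + 1))
  have hB : ∀ y ∈ Ioo (-1 : ℝ) 1, HasDerivAt B (y ^ m / (1 - y ^ 2) ^ (m + 1) -
      4 * y ^ (m + 2) / ((m + 1) * (1 + y ^ 2) ^ 2 * (1 - y ^ 2) ^ (m + 1))) y := by
    intro y hy
    have h1 : 0 < 1 - y ^ 2 := by nlinarith [hy.1, hy.2]
    have hsq := hasDerivAt_pow 2 y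
    have hden : (m + 1 : ℝ) * (1 + y ^ 2) * (1 - y ^ 2) ^ (m + 1) ≠ 0 := by positivity
    refine (((hasDerivAt_pow (m + 1) y).mul (hsq.const_sub 1)).div
      ((hsq.const_add 1).const_mul (m + 1 : ℝ) |>.mul ((hsq.const_sub 1).pow (m + 1)))
      hden).congr_deriv ?_
    simp only [Pi.mul_apply, Pi.pow_apply, Nat.add_sub_cancel, Nat.cast_add, Nat.cast_one,
      Nat.cast_ofNat]
    field_simp
    ring
  have hmono : MonotoneOn (fun y => radialIntegral (m + 1) y - B y) (Ico 0 1) := by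
    have hIco : Ico (0 : ℝ) 1 ⊆ Ioo (-1) 1 := Ico_subset_Ioo_left (by norm_num)
    have hderiv : ∀ y ∈ Ico (0 : ℝ) 1, HasDerivAt (fun y => radialIntegral (m + 1) y - B y)
        (4 * y ^ (m + 2) / ((m + 1) * (1 + y ^ 2) ^ 2 * (1 - y ^ 2) ^ (m + 1))) y := fun y hy =>
      ((hasDerivAt_radialIntegral (m + 1) (hIco hy)).sub (hB y (hIco hy))).congr_deriv
        (by rw [Nat.add_sub_cancel]; ring)
    refine monotoneOn_of_hasDerivWithinAt_nonneg (convex_Ico 0 1)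
      (fun y hy => (hderiv y hy).continuousAt.continuousWithinAt)
      (fun y hy => (hderiv y (interior_subset hy)).hasDerivWithinAt) fun y hy => ?_
    rw [interior_Ico] at hy
    have : 0 < 1 - y ^ 2 := by nlinarith [hy.1, hy.2]
    have := hy.1
    positivity
  have h1 : 0 < 1 - x ^ 2 := by nlinarith [hx.1, hx.2]
  calc x ^ (m + 1) / ((m + 1) * (1 + x ^ 2) * (1 - x ^ 2) ^ m) = B x := by
        simp only [B]; field_simp; ring
    _ ≤ radialIntegral (m + 1) x := by
        simpa [B, radialIntegral_zero_right] using hmono (left_mem_Ico.2 one_pos) hx hx.1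

/-- The function `ψ` above for `k = m + 1`. -/
noncomputable def slopeProfile (m : ℕ) (x : ℝ) : ℝ :=
  radialIntegral (m + 1) x * ((1 - x ^ 2) / x) ^ (m + 1)

theorem slopeProfile_pos (m : ℕ) {x : ℝ} (hx : x ∈ Ioo 0 1) : 0 < slopeProfile m x := by
  have : 0 < 1 - x ^ 2 := by nlinarith [hx.1, hx.2]
  have := radialIntegral_pos (m + 1) hx
  have := hx.1
  unfold slopeProfile
  positivity

theorem hasDerivAt_slopeProfile (m : ℕ) {x : ℝ} (hx : x ∈ Ioo 0 1) :
    HasDerivAt (slopeProfile m)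
      ((m + 1) * (1 + x ^ 2) * (1 - x ^ 2) ^ m / x ^ (m + 2) *
        (x ^ (m + 1) / ((m + 1) * (1 + x ^ 2) * (1 - x ^ 2) ^ m) - radialIntegral (m + 1) x))
      x := by
  have h1 : 0 < 1 - x ^ 2 := by nlinarith [hx.1, hx.2]
  have hx0 : x ≠ 0 := hx.1.ne'
  have hF := hasDerivAt_radialIntegral (m + 1) (Ioo_subset_Ioo_left (by norm_num) hx)
  have hw := ((hasDerivAt_pow 2 x).const_sub 1).div (hasDerivAt_id x) hx0
  refine (hF.mul (hw.pow (m + 1))).congr_deriv ?_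
  simp only [Pi.div_apply, Pi.pow_apply, div_pow, id, Nat.add_sub_cancel, Nat.cast_add,
    Nat.cast_one, Nat.cast_ofNat]
  field_simp
  ring

theorem antitoneOn_slopeProfile (m : ℕ) : AntitoneOn (slopeProfile m) (Ioo 0 1) := by
  refine antitoneOn_of_hasDerivWithinAt_nonpos (convex_Ioo 0 1)
    (fun x hx => (hasDerivAt_slopeProfile m hx).continuousAt.continuousWithinAt)
    (fun x hx => (hasDerivAt_slopeProfile m (interior_subset hx)).hasDerivWithinAt)
    fun x hx => ?_
  rw [interior_Ioo] at hx
  have : 0 < 1 - x ^ 2 := by nlinarith [hx.1, hx.2]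
  have := hx.1
  exact mul_nonpos_of_nonneg_of_nonpos (by positivity)
    (sub_nonpos.2 (le_radialIntegral_succ m (Ioo_subset_Ico_self hx)))

theorem hasDerivAt_radialIntegral_comp_rightInverse (m : ℕ) {g : ℝ → ℝ} {t : ℝ}
    (hg : ContinuousAt g t) (hgt : g t ∈ Ioo 0 1)
    (hfg : ∀ᶠ s in 𝓝 t, radialIntegral (m + 2) (g s) = s) :
    HasDerivAt (fun s => radialIntegral (m + 1) (g s)) ((1 - g t ^ 2) / g t) t := by
  have h1 : 0 < 1 - g t ^ 2 := by nlinarith [hgt.1, hgt.2]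
  have h0 := hgt.1
  have hIoo : g t ∈ Ioo (-1) 1 := Ioo_subset_Ioo_left (by norm_num) hgt
  have hinv := HasDerivAt.of_local_left_inverse hg (hasDerivAt_radialIntegral (m + 2) hIoo)
    (by positivity) hfg
  refine ((hasDerivAt_radialIntegral (m + 1) hIoo).comp t hinv).congr_deriv ?_
  simp only [Nat.add_sub_cancel, show m + 2 - 1 = m + 1 from rfl]
  field_simp
  ring

theorem hasDerivAt_rpow_radialIntegral_comp_rightInverse (m : ℕ) {g : ℝ → ℝ} {t : ℝ}
    (hg : ContinuousAt g t) (hgt : g t ∈ Ioo 0 1)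
    (hfg : ∀ᶠ s in 𝓝 t, radialIntegral (m + 2) (g s) = s) :
    HasDerivAt (fun s => radialIntegral (m + 1) (g s) ^ (((m : ℝ) + 2) / (m + 1)))
      (((m : ℝ) + 2) / (m + 1) * slopeProfile m (g t) ^ ((m : ℝ) + 1)⁻¹) t := by
  set x := g t
  have hh := radialIntegral_pos (m + 1) hgt
  have hw : 0 < (1 - x ^ 2) / x := div_pos (by nlinarith [hgt.1, hgt.2]) hgt.1
  have hexp : ((m : ℝ) + 2) / (m + 1) - 1 = ((m : ℝ) + 1)⁻¹ := by field_simp; ring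
  have hroot : (((1 - x ^ 2) / x) ^ (m + 1)) ^ ((m : ℝ) + 1)⁻¹ = (1 - x ^ 2) / x := by
    exact_mod_cast pow_rpow_inv_natCast hw.le (Nat.succ_ne_zero m)
  refine ((hasDerivAt_radialIntegral_comp_rightInverse m hg hgt hfg).rpow_const
    (Or.inl hh.ne')).congr_deriv ?_
  rw [slopeProfile, mul_rpow hh.le (by positivity), hroot, hexp]
  ring

theorem continuousOn_of_rightInvOn_radialIntegral {k : ℕ} {g : ℝ → ℝ}
    (hg : MapsTo g (Ici 0) (Ico 0 1)) (hfg : RightInvOn g (radialIntegral k) (Ici 0)) :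
    ContinuousOn g (Ici 0) := by
  have h0 : Ici (radialIntegral k 0) = Ici 0 := by rw [radialIntegral_zero_right]
  rw [← h0] at hg hfg ⊢
  exact (strictMonoOn_radialIntegral k).continuousOn_of_rightInvOn one_pos hg hfg

theorem mem_Ioo_of_rightInvOn_radialIntegral {k : ℕ} {g : ℝ → ℝ}
    (hg : MapsTo g (Ici 0) (Ico 0 1)) (hfg : RightInvOn g (radialIntegral k) (Ici 0)) {t : ℝ}
    (ht : 0 < t) : g t ∈ Ioo 0 1 := by
  obtain ⟨hge, hlt⟩ := hg (mem_Ici.2 ht.le)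
  refine ⟨hge.lt_of_ne fun h0 => ht.ne ?_, hlt⟩
  rw [← hfg (mem_Ici.2 ht.le), ← h0, radialIntegral_zero_right]

theorem concaveOn_rpow_radialIntegral_comp_rightInverse (m : ℕ) {g : ℝ → ℝ}
    (hg : MapsTo g (Ici 0) (Ico 0 1)) (hfg : RightInvOn g (radialIntegral (m + 2)) (Ici 0)) :
    ConcaveOn ℝ (Ici 0) (fun t => radialIntegral (m + 1) (g t) ^ (((m : ℝ) + 2) / (m + 1))) := by
  have hcont := continuousOn_of_rightInvOn_radialIntegral hg hfg
  have hmono : MonotoneOn g (Ici 0) := Function.monotoneOn_of_rightInvOn_of_mapsTo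
    (strictMonoOn_radialIntegral (m + 2)).monotoneOn hfg hg
  have hpos : ∀ t ∈ Ioi (0 : ℝ), g t ∈ Ioo 0 1 := fun _ ht =>
    mem_Ioo_of_rightInvOn_radialIntegral hg hfg ht
  have hderiv : ∀ t ∈ Ioi (0 : ℝ), HasDerivAt
      (fun s => radialIntegral (m + 1) (g s) ^ (((m : ℝ) + 2) / (m + 1)))
      (((m : ℝ) + 2) / (m + 1) * slopeProfile m (g t) ^ ((m : ℝ) + 1)⁻¹) t := fun t ht =>
    hasDerivAt_rpow_radialIntegral_comp_rightInverse m (hcont.continuousAt (Ici_mem_nhds ht))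
      (hpos t ht) (eventually_of_mem (Ioi_mem_nhds ht) fun _ hs => hfg (Ioi_subset_Ici_self hs))
  refine AntitoneOn.concaveOn_of_deriv (convex_Ici 0) ?_ ?_ ?_
  · exact ((continuousOn_radialIntegral (m + 1)).comp hcont fun t ht =>
      Ico_subset_Ioo_left (by norm_num) (hg ht)).rpow_const fun _ _ => Or.inr (by positivity)
  · rw [interior_Ici]
    exact fun t ht => (hderiv t ht).differentiableAt.differentiableWithinAt
  · rw [interior_Ici]
    refine AntitoneOn.congr (fun a ha b hb hab => ?_) fun t ht => (hderiv t ht).deriv.symm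
    have := (slopeProfile_pos m (hpos b hb)).le
    gcongr
    exact antitoneOn_slopeProfile m (hpos a ha) (hpos b hb)
      (hmono (Ioi_subset_Ici_self ha) (Ioi_subset_Ici_self hb) hab)

/-- For every integer `n ≥ 2`, the function `G(t) = (F_{n-1}(F_n⁻¹(t)))^(n/(n-1))` is
concave on `[0, ∞)`, where `F_m(t) = ∫_0^t r^(m-1)/(1-r²)^m dr` for `t ∈ [0,1)` and
`Finv` is the inverse of `F_n` mapping `[0,∞)` back into `[0,1)`. -/
theorem stmt0 (n : ℕ) (hn : 2 ≤ n)
    (F : ℕ → ℝ → ℝ)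
    (hF : ∀ m t, F m t = ∫ r in (0:ℝ)..t, r ^ (m - 1) / (1 - r ^ 2) ^ m)
    (Finv : ℝ → ℝ)
    (hFinv : ∀ t ∈ Ici (0:ℝ), Finv t ∈ Ico (0:ℝ) 1 ∧ F n (Finv t) = t) :
    ConcaveOn ℝ (Ici 0) (fun t => (F (n - 1) (Finv t)) ^ ((n : ℝ) / ((n : ℝ) - 1))) := by
  obtain rfl : F = radialIntegral := funext₂ hF
  obtain ⟨m, rfl⟩ : ∃ m, n = m + 2 := ⟨n - 2, by omega⟩
  have hexp : ((m + 2 : ℕ) : ℝ) / ((m + 2 : ℕ) - 1) = ((m : ℝ) + 2) / (m + 1) := by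
    push_cast; ring
  rw [show m + 2 - 1 = m + 1 from rfl, hexp]
  exact concaveOn_rpow_radialIntegral_comp_rightInverse m (fun t ht => (hFinv t ht).1)
    fun t ht => (hFinv t ht).2
end

section
/- For every integer n ≥ 2 and every t ∈ (0,1), the inequality (n-1)·∫_0^t r^{n-2}/(1-r^2)^{n-1} dr ≥ t^{n-1} / ((1-t^2)^{n-2}(1+t^2)) holds. -/
/-! With `F t = t^(n-1) / ((1-t^2)^(n-2) (1+t^2))` one computes
`F' = (n-1) t^(n-2)/(1-t^2)^(n-1) - 4 t^n / ((1-t^2)^(n-1) (1+t^2)^2)`, so on `[0,1)` the derivative of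
`F` is dominated by the integrand times `n-1`; since `F 0 = 0`, integrating from `0` to `t` gives the
inequality. -/

open Set

lemma hasDerivAt_pow_succ_div_one_sub_sq_pow_mul_one_add_sq (m : ℕ) {x : ℝ} (hx : 1 - x ^ 2 ≠ 0) :
    HasDerivAt (fun y : ℝ => y ^ (m + 1) / ((1 - y ^ 2) ^ m * (1 + y ^ 2)))
      (((m : ℝ) + 1) * x ^ m / (1 - x ^ 2) ^ (m + 1)
        - 4 * x ^ (m + 2) / ((1 - x ^ 2) ^ (m + 1) * (1 + x ^ 2) ^ 2)) x := by
  have hx' : 1 + x ^ 2 ≠ 0 := by positivity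
  have hnum : HasDerivAt (fun y : ℝ => y ^ (m + 1)) ((m + 1 : ℕ) * x ^ m) x := by
    simpa using hasDerivAt_pow (m + 1) x
  have hsub : HasDerivAt (fun y : ℝ => 1 - y ^ 2) (-(2 * x ^ 1)) x := by
    simpa using (hasDerivAt_pow 2 x).const_sub 1
  have hadd : HasDerivAt (fun y : ℝ => 1 + y ^ 2) (2 * x ^ 1) x := by
    simpa using (hasDerivAt_pow 2 x).const_add 1
  refine (hnum.div ((hsub.pow m).mul hadd) (mul_ne_zero (pow_ne_zero m hx) hx')).congr_deriv ?_
  simp only [Pi.mul_apply, Pi.pow_apply]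
  rcases m with _ | k
  · field_simp
    ring
  · simp only [Nat.add_sub_cancel]
    field_simp
    push_cast
    ring

lemma continuousOn_pow_div_one_sub_sq_pow (m k : ℕ) {t : ℝ} (ht : t < 1) :
    ContinuousOn (fun r : ℝ => r ^ m / (1 - r ^ 2) ^ k) (Icc 0 t) := by
  refine ContinuousOn.div (by fun_prop) (by fun_prop) fun r hr => ?_
  have : r ^ 2 < 1 := by nlinarith [hr.1, hr.2]
  exact pow_ne_zero _ (by linarith)

theorem stmt1 (n : ℕ) (hn : 2 ≤ n) (t : ℝ) (ht : t ∈ Set.Ioo (0:ℝ) 1) :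
    ((n : ℝ) - 1) * ∫ r in (0:ℝ)..t, r ^ (n - 2) / (1 - r ^ 2) ^ (n - 1) ≥
      t ^ (n - 1) / ((1 - t ^ 2) ^ (n - 2) * (1 + t ^ 2)) := by
  obtain ⟨m, rfl⟩ : ∃ m, n = m + 2 := ⟨n - 2, by omega⟩
  obtain ⟨ht0, ht1⟩ := ht
  simp only [Nat.add_sub_cancel, show m + 2 - 1 = m + 1 from rfl, Nat.cast_add, Nat.cast_ofNat,
    show (m : ℝ) + 2 - 1 = m + 1 by ring]
  have hcont : ContinuousOn (fun y : ℝ => y ^ (m + 1) / ((1 - y ^ 2) ^ m * (1 + y ^ 2))) (Icc 0 t) := by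
    simpa only [Pi.div_def, div_div] using (continuousOn_pow_div_one_sub_sq_pow (m + 1) m ht1).div
      (g := fun y : ℝ => 1 + y ^ 2) (by fun_prop) fun x _ => by positivity
  have hle (x : ℝ) (hx : x ∈ Ioo 0 t) :
      ((m : ℝ) + 1) * x ^ m / (1 - x ^ 2) ^ (m + 1)
        - 4 * x ^ (m + 2) / ((1 - x ^ 2) ^ (m + 1) * (1 + x ^ 2) ^ 2)
        ≤ ((m : ℝ) + 1) * (x ^ m / (1 - x ^ 2) ^ (m + 1)) := by
    have : 0 < 1 - x ^ 2 := by nlinarith [hx.1, hx.2]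
    have : 0 ≤ x := hx.1.le
    rw [← mul_div_assoc]
    linarith [show 0 ≤ 4 * x ^ (m + 2) / ((1 - x ^ 2) ^ (m + 1) * (1 + x ^ 2) ^ 2) by positivity]
  have key := intervalIntegral.sub_le_integral_of_hasDeriv_right_of_le ht0.le hcont
    (fun x hx => (hasDerivAt_pow_succ_div_one_sub_sq_pow_mul_one_add_sq m
      (by nlinarith [hx.1, hx.2])).hasDerivWithinAt)
    ((continuousOn_pow_div_one_sub_sq_pow m (m + 1) ht1).const_smul ((m : ℝ) + 1)).integrableOn_Icc
    hle
  simpa [intervalIntegral.integral_const_mul] using key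
end

section
/- For any real numbers x, r with 0 < x ≤ π/2 and 0 < r ≤ π/2, the inequality x^2 - r^2 ≥ (2r/sin r)(cos r - cos x) holds, with equality if and only if x = r. -/
/-!
Put `g(t) = t² - r² - (2r / sin r)(cos r - cos t)`, so that `g r = 0` and
`g'(t) = 2t - (2r / sin r) sin t`. Strict concavity of `sin` on `[0, π]` makes `sin t / t`
strictly decreasing there, so `g' < 0` on `(0, r)` and `g' > 0` on `(r, π)`: `g` has a strict
minimum `0` at `r` on `[0, π]`.
-/

open Real Set

lemma mul_sin_lt_mul_sin {a b : ℝ} (ha : 0 < a) (hab : a < b) (hb : b ≤ π) :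
    a * sin b < b * sin a := by
  have hb0 : 0 < b := ha.trans hab
  have h := strictConcaveOn_sin_Icc.secant_strict_mono (a := 0) ⟨le_rfl, pi_pos.le⟩
    ⟨ha.le, hab.le.trans hb⟩ ⟨hb0.le, hb⟩ ha.ne' hb0.ne' hab
  simp only [sin_zero, sub_zero] at h
  rw [div_lt_div_iff₀ hb0 ha] at h
  linarith

noncomputable def cosineGap (r t : ℝ) : ℝ := t ^ 2 - r ^ 2 - 2 * r / sin r * (cos r - cos t)

lemma cosineGap_self (r : ℝ) : cosineGap r r = 0 := by simp [cosineGap]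

lemma hasDerivAt_cosineGap (r t : ℝ) :
    HasDerivAt (cosineGap r) (2 * t - 2 * r / sin r * sin t) t := by
  have h := (((hasDerivAt_pow 2 t).sub_const (r ^ 2)).sub
    (((hasDerivAt_cos t).const_sub (cos r)).const_mul (2 * r / sin r)))
  exact h.congr_deriv (by norm_num)

lemma continuous_cosineGap (r : ℝ) : Continuous (cosineGap r) :=
  continuous_iff_continuousAt.2 fun t => (hasDerivAt_cosineGap r t).continuousAt

lemma strictAntiOn_cosineGap {r : ℝ} (hr0 : 0 < r) (hrπ : r < π) :
    StrictAntiOn (cosineGap r) (Icc 0 r) := by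
  refine strictAntiOn_of_deriv_neg (convex_Icc 0 r) (continuous_cosineGap r).continuousOn ?_
  rw [interior_Icc]
  rintro t ⟨ht0, htr⟩
  have hsin : 0 < sin r := sin_pos_of_pos_of_lt_pi hr0 hrπ
  have hkey := mul_sin_lt_mul_sin ht0 htr hrπ.le
  rw [(hasDerivAt_cosineGap r t).deriv, sub_neg, div_mul_eq_mul_div, lt_div_iff₀ hsin]
  linarith

lemma strictMonoOn_cosineGap {r : ℝ} (hr0 : 0 < r) (hrπ : r < π) :
    StrictMonoOn (cosineGap r) (Icc r π) := by
  refine strictMonoOn_of_deriv_pos (convex_Icc r π) (continuous_cosineGap r).continuousOn ?_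
  rw [interior_Icc]
  rintro t ⟨hrt, htπ⟩
  have hsin : 0 < sin r := sin_pos_of_pos_of_lt_pi hr0 hrπ
  have hkey := mul_sin_lt_mul_sin hr0 hrt htπ.le
  rw [(hasDerivAt_cosineGap r t).deriv, sub_pos, div_mul_eq_mul_div, div_lt_iff₀ hsin]
  linarith

lemma cosineGap_pos {r x : ℝ} (hr0 : 0 < r) (hrπ : r < π) (hx0 : 0 ≤ x) (hxπ : x ≤ π)
    (hxr : x ≠ r) : 0 < cosineGap r x := by
  rw [← cosineGap_self r]
  rcases hxr.lt_or_gt with hlt | hgt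
  · exact strictAntiOn_cosineGap hr0 hrπ ⟨hx0, hlt.le⟩ ⟨hr0.le, le_rfl⟩ hlt
  · exact strictMonoOn_cosineGap hr0 hrπ ⟨le_rfl, hrπ.le⟩ ⟨hgt.le, hxπ⟩ hgt

theorem stmt3 (x r : ℝ) (hx : x ∈ Set.Ioc 0 (π / 2)) (hr : r ∈ Set.Ioc 0 (π / 2)) :
    x ^ 2 - r ^ 2 ≥ (2 * r / Real.sin r) * (Real.cos r - Real.cos x) ∧
      (x ^ 2 - r ^ 2 = (2 * r / Real.sin r) * (Real.cos r - Real.cos x) ↔ x = r) := by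
  have hπ : π / 2 < π := half_lt_self pi_pos
  by_cases hxr : x = r
  · subst hxr
    simp
  · have hgap := cosineGap_pos hr.1 (hr.2.trans_lt hπ) hx.1.le (hx.2.trans hπ.le) hxr
    unfold cosineGap at hgap
    exact ⟨by linarith, iff_of_false (by linarith) hxr⟩
end

section
/- For all real numbers x, y ∈ [0, π/2], |cos x - cos y|/2 ≥ ((x - y)/π)^2. -/
open Real

theorem stmt6 (x y : ℝ) (hx : x ∈ Set.Icc 0 (π / 2)) (hy : y ∈ Set.Icc 0 (π / 2)) :
    |Real.cos x - Real.cos y| / 2 ≥ ((x - y) / π) ^ 2 := by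
  obtain ⟨hx0, hx1⟩ := hx
  obtain ⟨hy0, hy1⟩ := hy
  have hπ : (0:ℝ) < π := Real.pi_pos
  wlog h : x ≤ y generalizing x y
  · have := this y x hy0 hy1 hx0 hx1 (le_of_not_ge h)
    rw [abs_sub_comm] at this
    have e : ((x - y) / π) ^ 2 = ((y - x) / π) ^ 2 := by ring
    rw [e]; exact this
  -- key: for x ≤ y, cos x - cos y = 2 sin((x+y)/2) sin((y-x)/2)
  set a := (x + y) / 2 with ha
  set b := (y - x) / 2 with hb
  have hb0 : 0 ≤ b := by simp [hb]; linarith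
  have hba : b ≤ a := by simp [ha, hb]; linarith
  have haπ : a ≤ π / 2 := by simp [ha]; linarith
  have hsb : 2 / π * b ≤ Real.sin b := Real.mul_le_sin hb0 (hba.trans haπ)
  have hsab : Real.sin b ≤ Real.sin a := by
    apply Real.sin_le_sin_of_le_of_le_pi_div_two (by linarith) haπ hba
  have hsb0 : 0 ≤ Real.sin b := le_trans (by positivity) hsb
  have hcos : Real.cos x - Real.cos y = 2 * Real.sin a * Real.sin b := by
    rw [Real.cos_sub_cos]
    have : (x - y) / 2 = -b := by rw [hb]; ring
    rw [this, Real.sin_neg]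
    ring
  have hsa0 : 0 ≤ Real.sin a := le_trans hsb0 hsab
  have hnn : 0 ≤ Real.cos x - Real.cos y := by
    rw [hcos]; positivity
  rw [abs_of_nonneg hnn, hcos, ge_iff_le]
  have hxy : (x - y) / π = -(2 * b / π) := by field_simp; linarith
  rw [hxy]
  have key : (2 / π * b) * (2 / π * b) ≤ Real.sin a * Real.sin b :=
    mul_le_mul (hsb.trans hsab) hsb (by positivity) hsa0
  have : (-(2 * b / π)) ^ 2 = (2 / π * b) * (2 / π * b) := by ring
  rw [this]
  linarith
end

section
/- For every real r ∈ (0, π/2), (sin^{n-1} r)·∫_0^r sin^{n-2} t dt < (sin^{n-1} r)·(tan r · sin^{n-2} r)/(n-1), i.e. ∫_0^r sin^{n-2} t dt < tan r · sin^{n-2} r / (n-1), for every integer n ≥ 3. -/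
open Real

theorem stmt7 (n : ℕ) (hn : 3 ≤ n) (r : ℝ) (hr : r ∈ Set.Ioo 0 (π / 2)) :
    (∫ t in (0:ℝ)..r, Real.sin t ^ (n - 2)) <
      Real.tan r * Real.sin r ^ (n - 2) / ((n : ℝ) - 1) := by
  obtain ⟨hr0, hrπ⟩ := hr
  set m := n - 2 with hm
  have hπ := Real.pi_pos
  have hcosr : 0 < Real.cos r := Real.cos_pos_of_mem_Ioo ⟨by linarith, hrπ⟩
  have key : (∫ t in (0:ℝ)..r, Real.sin t ^ m) <
      ∫ t in (0:ℝ)..r, Real.sin t ^ m * Real.cos t / Real.cos r := by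
    apply intervalIntegral.integral_lt_integral_of_continuousOn_of_le_of_exists_lt hr0
    · exact (Real.continuous_sin.pow m).continuousOn
    · exact (((Real.continuous_sin.pow m).mul Real.continuous_cos).div_const _).continuousOn
    · intro x hx
      have hx0 : 0 ≤ x := hx.1.le
      have hcos : Real.cos r ≤ Real.cos x :=
        Real.cos_le_cos_of_nonneg_of_le_pi hx0 (by linarith) hx.2
      have hs : 0 ≤ Real.sin x ^ m :=
        pow_nonneg (Real.sin_nonneg_of_nonneg_of_le_pi hx0 (by linarith [hx.2])) m
      calc Real.sin x ^ m = Real.sin x ^ m * Real.cos r / Real.cos r := by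
              field_simp
        _ ≤ Real.sin x ^ m * Real.cos x / Real.cos r := by gcongr
    · refine ⟨r / 2, ⟨by linarith, by linarith⟩, ?_⟩
      have hcos : Real.cos r < Real.cos (r / 2) :=
        Real.cos_lt_cos_of_nonneg_of_le_pi (by linarith) (by linarith) (by linarith)
      have hs : 0 < Real.sin (r / 2) ^ m :=
        pow_pos (Real.sin_pos_of_pos_of_lt_pi (by linarith) (by linarith)) m
      calc Real.sin (r / 2) ^ m = Real.sin (r / 2) ^ m * Real.cos r / Real.cos r := by
              field_simp
        _ < Real.sin (r / 2) ^ m * Real.cos (r / 2) / Real.cos r := by gcongr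
  have hval : (∫ t in (0:ℝ)..r, Real.sin t ^ m * Real.cos t) =
      Real.sin r ^ (m + 1) / (m + 1) := by
    have := integral_sin_pow_mul_cos_pow_odd (a := 0) (b := r) m 0
    simp only [mul_zero, zero_add, pow_one, pow_zero, mul_one, Real.sin_zero] at this
    rw [this, integral_pow]
    simp
  have hint : (∫ t in (0:ℝ)..r, Real.sin t ^ m * Real.cos t / Real.cos r) =
      Real.sin r ^ (m + 1) / (m + 1) / Real.cos r := by
    rw [intervalIntegral.integral_div, hval]
  have hcast : ((n : ℝ) - 1) = (m : ℝ) + 1 := by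
    have : m + 1 = n - 1 := by omega
    have h2 : ((n:ℕ) : ℝ) - 1 = ((n - 1 : ℕ) : ℝ) := by
      push_cast [Nat.cast_sub (by omega : 1 ≤ n)]; ring
    rw [h2, ← this]; push_cast; ring
  have hsr : 0 < Real.sin r := Real.sin_pos_of_pos_of_lt_pi hr0 (by linarith)
  have heq : Real.tan r * Real.sin r ^ m / ((n : ℝ) - 1) =
      Real.sin r ^ (m + 1) / (m + 1) / Real.cos r := by
    rw [hcast, Real.tan_eq_sin_div_cos]
    field_simp
    ring
  rw [heq]
  rw [hint] at key
  exact key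
end

section
/- For every integer n ≥ 2 and every x ∈ [0, π/2], φ_{n-1}(π/2)·φ_n(x) ≤ φ_n(π/2)·φ_{n-1}(x), where φ_m(x) = ∫_0^x sin^{m-1} t dt; equality holds if and only if x = 0 or x = π/2. -/
open Real

lemma sinpow_ii (k : ℕ) (a b : ℝ) :
    IntervalIntegrable (fun t => Real.sin t ^ k) MeasureTheory.volume a b :=
  (Continuous.pow (Real.continuous_sin) k).intervalIntegrable a b

lemma key8 (m : ℕ) (y : ℝ) (hy : y ∈ Set.Ioo 0 (π / 2)) :
    (∫ t in (0:ℝ)..(π/2), Real.sin t ^ m) * (∫ t in (0:ℝ)..y, Real.sin t ^ (m+1))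
      < (∫ t in (0:ℝ)..(π/2), Real.sin t ^ (m+1)) * (∫ t in (0:ℝ)..y, Real.sin t ^ m) := by
  have hπ : (0:ℝ) < π / 2 := by positivity
  set A := ∫ t in (0:ℝ)..(π/2), Real.sin t ^ m with hAdef
  set B := ∫ t in (0:ℝ)..(π/2), Real.sin t ^ (m+1) with hBdef
  have hsinpos : ∀ t ∈ Set.Ioo (0:ℝ) (π/2), 0 < Real.sin t := fun t ht =>
    Real.sin_pos_of_pos_of_lt_pi ht.1 (ht.2.trans (by linarith [Real.pi_pos]))
  have hB : 0 < B :=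
    intervalIntegral.intervalIntegral_pos_of_pos_on (sinpow_ii _ _ _)
      (fun t ht => pow_pos (hsinpos t ht) _) hπ
  have hBA : B < A := by
    apply intervalIntegral.integral_lt_integral_of_continuousOn_of_le_of_exists_lt hπ
    · exact (Real.continuous_sin.pow _).continuousOn
    · exact (Real.continuous_sin.pow _).continuousOn
    · intro t ht
      have h1 : 0 ≤ Real.sin t := Real.sin_nonneg_of_nonneg_of_le_pi ht.1.le
        (ht.2.trans (by linarith [Real.pi_pos]))
      have h2 : Real.sin t ≤ 1 := Real.sin_le_one t
      calc Real.sin t ^ (m+1) = Real.sin t ^ m * Real.sin t := by ring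
        _ ≤ Real.sin t ^ m * 1 := by
            exact mul_le_mul_of_nonneg_left h2 (pow_nonneg h1 m)
        _ = Real.sin t ^ m := by ring
    · refine ⟨π/4, ⟨by positivity, by linarith⟩, ?_⟩
      have h1 : Real.sin (π/4) = Real.sqrt 2 / 2 := Real.sin_pi_div_four
      have h2 : (0:ℝ) < Real.sqrt 2 / 2 := by positivity
      have h3 : Real.sqrt 2 / 2 < 1 := by
        nlinarith [Real.sq_sqrt (by norm_num : (2:ℝ) ≥ 0), Real.sqrt_nonneg 2]
      calc Real.sin (π/4) ^ (m+1) = Real.sin (π/4) ^ m * Real.sin (π/4) := by ring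
        _ < Real.sin (π/4) ^ m * 1 := by
            rw [h1]; exact mul_lt_mul_of_pos_left h3 (pow_pos h2 m)
        _ = Real.sin (π/4) ^ m := by ring
  have hA : 0 < A := hB.trans hBA
  -- ratio
  have hr0 : 0 < B / A := div_pos hB hA
  have hr1 : B / A < 1 := (div_lt_one hA).2 hBA
  set x0 := Real.arcsin (B / A) with hx0def
  have hsinx0 : Real.sin x0 = B / A := Real.sin_arcsin (by linarith) hr1.le
  have hx0pos : 0 < x0 := Real.arcsin_pos.2 hr0
  have hx0lt : x0 < π / 2 := by
    have := Real.arcsin_lt_pi_div_two (x := B / A)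
    exact this.2 hr1
  -- g t = B * sin^m - A * sin^(m+1)
  have hgint : ∀ a b : ℝ, IntervalIntegrable
      (fun t => B * Real.sin t ^ m - A * Real.sin t ^ (m+1)) MeasureTheory.volume a b :=
    fun a b => ((sinpow_ii m a b).const_mul B).sub ((sinpow_ii (m+1) a b).const_mul A)
  have hrw : ∀ y : ℝ, (∫ t in (0:ℝ)..y, (B * Real.sin t ^ m - A * Real.sin t ^ (m+1)))
      = B * (∫ t in (0:ℝ)..y, Real.sin t ^ m) - A * (∫ t in (0:ℝ)..y, Real.sin t ^ (m+1)) := by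
    intro y
    rw [intervalIntegral.integral_sub ((sinpow_ii m 0 y).const_mul B)
      ((sinpow_ii (m+1) 0 y).const_mul A), intervalIntegral.integral_const_mul,
      intervalIntegral.integral_const_mul]
  rw [show A * (∫ t in (0:ℝ)..y, Real.sin t ^ (m+1)) < B * (∫ t in (0:ℝ)..y, Real.sin t ^ m)
      ↔ 0 < B * (∫ t in (0:ℝ)..y, Real.sin t ^ m) - A * (∫ t in (0:ℝ)..y, Real.sin t ^ (m+1))
      from (sub_pos).symm, ← hrw]
  rcases le_or_gt y x0 with hyx | hyx
  · apply intervalIntegral.intervalIntegral_pos_of_pos_on (hgint 0 y) _ hy.1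
    intro t ht
    have ht2 : t < π / 2 := ht.2.trans_le (hyx.trans hx0lt.le)
    have hst : 0 < Real.sin t := hsinpos t ⟨ht.1, ht2⟩
    have hmono : Real.sin t < Real.sin x0 := by
      apply Real.strictMonoOn_sin ⟨by linarith [Real.pi_pos, ht.1], ht2.le⟩ ⟨by linarith [Real.pi_pos], hx0lt.le⟩
      exact lt_of_lt_of_le ht.2 hyx
    rw [hsinx0, lt_div_iff₀ hA] at hmono
    have : A * Real.sin t ^ (m+1) < B * Real.sin t ^ m := by
      calc A * Real.sin t ^ (m+1) = (Real.sin t * A) * Real.sin t ^ m := by ring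
        _ < B * Real.sin t ^ m := by
            exact mul_lt_mul_of_pos_right hmono (pow_pos hst m)
    linarith
  · -- total integral over [0, π/2] is zero
    have htot : (∫ t in (0:ℝ)..(π/2), (B * Real.sin t ^ m - A * Real.sin t ^ (m+1))) = 0 := by
      rw [hrw]; rw [← hAdef, ← hBdef]; ring
    have hadd := intervalIntegral.integral_add_adjacent_intervals (hgint 0 y) (hgint y (π/2))
    have hneg : (∫ t in y..(π/2), (B * Real.sin t ^ m - A * Real.sin t ^ (m+1))) < 0 := by
      have : 0 < ∫ t in y..(π/2), (A * Real.sin t ^ (m+1) - B * Real.sin t ^ m) := by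
        apply intervalIntegral.intervalIntegral_pos_of_pos_on
          (((sinpow_ii (m+1) _ _).const_mul A).sub ((sinpow_ii m _ _).const_mul B)) _ hy.2
        intro t ht
        have hst : 0 < Real.sin t := hsinpos t ⟨hy.1.trans ht.1, ht.2⟩
        have hmono : Real.sin x0 < Real.sin t := by
          apply Real.strictMonoOn_sin ⟨by linarith [Real.pi_pos], hx0lt.le⟩ ⟨by linarith [Real.pi_pos, hy.1.trans ht.1], ht.2.le⟩
          exact hyx.trans ht.1
        rw [hsinx0, div_lt_iff₀ hA] at hmono
        have : B * Real.sin t ^ m < A * Real.sin t ^ (m+1) := by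
          calc B * Real.sin t ^ m < (Real.sin t * A) * Real.sin t ^ m :=
                mul_lt_mul_of_pos_right hmono (pow_pos hst m)
            _ = A * Real.sin t ^ (m+1) := by ring
        linarith
      have heq : (∫ t in y..(π/2), (A * Real.sin t ^ (m+1) - B * Real.sin t ^ m))
          = -(∫ t in y..(π/2), (B * Real.sin t ^ m - A * Real.sin t ^ (m+1))) := by
        rw [← intervalIntegral.integral_neg]
        congr 1; ext t; ring
      rw [heq] at this; linarith
    linarith [hadd, htot, hneg]

/-- `φ_m(x) = ∫_0^x sin^(m-1) t dt`.  For `n ≥ 2` and `x ∈ [0, π/2]`,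
`φ_{n-1}(π/2) · φ_n(x) ≤ φ_n(π/2) · φ_{n-1}(x)`, with equality iff `x = 0` or `x = π/2`. -/
theorem stmt8 (n : ℕ) (hn : 2 ≤ n)
    (φ : ℕ → ℝ → ℝ) (hφ : ∀ m x, φ m x = ∫ t in (0:ℝ)..x, Real.sin t ^ (m - 1))
    (x : ℝ) (hx : x ∈ Set.Icc 0 (π / 2)) :
    φ (n - 1) (π / 2) * φ n x ≤ φ n (π / 2) * φ (n - 1) x ∧
      (φ (n - 1) (π / 2) * φ n x = φ n (π / 2) * φ (n - 1) x ↔ x = 0 ∨ x = π / 2) := by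
  obtain ⟨m, rfl⟩ : ∃ m, n = m + 2 := ⟨n - 2, by omega⟩
  have e1 : (m + 2 - 1 : ℕ) = m + 1 := rfl
  have e2 : (m + 2 - 1 - 1 : ℕ) = m := rfl
  have e3 : (m + 1 - 1 : ℕ) = m := rfl
  simp only [hφ, e1, e2, e3]
  rcases eq_or_lt_of_le hx.1 with h0 | h0
  · subst h0
    simp [intervalIntegral.integral_same]
  rcases eq_or_lt_of_le hx.2 with h2 | h2
  · subst h2
    constructor
    · exact le_of_eq (mul_comm _ _)
    · simp [mul_comm]
  have hk := key8 m x ⟨h0, h2⟩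
  refine ⟨hk.le, ?_, ?_⟩
  · intro h; exact absurd h hk.ne
  · rintro (rfl | rfl)
    · simp
    · exact mul_comm _ _
end

section
/- Let g : [0,∞) → (0,∞) be decreasing, s : [0,∞) → [0,∞) convex with s(0) = 0 and s > 0 on (0,∞), and n ≥ 2. Then for all x > 0, s'(x) ∫_0^x g(t) s(t)^{n-2} dt > g(x) s(x)^{n-1}/(n-1). -/
/-!
Write `m = n - 2` and `a = s'(x)`. By convexity the tangent line `s(x) + a (t - x)` lies below
`s`, and since `s(0) = 0` it vanishes at some `c ∈ [0, x]`; integrating its `m`-th power over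
`[c, x]` gives `s(x)^(m+1) ≤ (m+1) a ∫₀ˣ sᵐ`. Since `g` is strictly decreasing and `s > 0` on
`(0, x)`, `∫₀ˣ g sᵐ > g(x) ∫₀ˣ sᵐ`, and `a ≥ s(x)/x > 0` lets us multiply the two bounds.
-/

open Set MeasureTheory intervalIntegral

lemma ConvexOn.monotoneOn_Ici {s : ℝ → ℝ} {a : ℝ} (hs : ConvexOn ℝ (Ici a) s)
    (hmin : ∀ t ≥ a, s a ≤ s t) : MonotoneOn s (Ici a) := by
  intro t ht u hu htu
  rcases (mem_Ici.1 ht).eq_or_lt with rfl | hat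
  · exact hmin u hu
  · exact hs.le_right_of_left_le'' self_mem_Ici hu hat htu (hmin t ht)

lemma ConvexOn.add_deriv_mul_sub_le {S : Set ℝ} {f : ℝ → ℝ} {x t : ℝ} (hf : ConvexOn ℝ S f)
    (hx : x ∈ S) (ht : t ∈ S) (hfd : DifferentiableAt ℝ f x) :
    f x + deriv f x * (t - x) ≤ f t := by
  rcases lt_trichotomy t x with htx | rfl | hxt
  · have h := hf.slope_le_deriv ht hx htx hfd
    rw [slope_def_field, div_le_iff₀ (sub_pos.2 htx)] at h
    linarith
  · simp
  · have h := hf.deriv_le_slope hx ht hxt hfd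
    rw [slope_def_field, le_div_iff₀ (sub_pos.2 hxt)] at h
    linarith

lemma integral_add_mul_sub_pow {a b x : ℝ} (ha : a ≠ 0) (m : ℕ) :
    ∫ t in (x - b / a)..x, (b + a * (t - x)) ^ m = b ^ (m + 1) / ((m + 1) * a) := by
  have h := integral_comp_mul_add (fun u => u ^ m) ha (b - a * x) (a := x - b / a) (b := x)
  simp only [smul_eq_mul] at h
  rw [show a * (x - b / a) + (b - a * x) = 0 by field_simp; ring,
    show a * x + (b - a * x) = b by ring, integral_pow] at h
  rw [show (fun t => (b + a * (t - x)) ^ m) = fun t => (a * t + (b - a * x)) ^ m by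
    ext t; ring_nf, h]
  field_simp
  simp

lemma IntervalIntegrable.mul_monotoneOn {f u : ℝ → ℝ} {a b : ℝ} (hab : a ≤ b)
    (hf : IntervalIntegrable f volume a b) (hu : MonotoneOn u (Icc a b)) :
    IntervalIntegrable (fun t => f t * u t) volume a b := by
  have hu' : IntervalIntegrable u volume a b := by
    apply MonotoneOn.intervalIntegrable
    rwa [uIcc_of_le hab]
  rw [intervalIntegrable_iff_integrableOn_Ioc_of_le hab] at hf hu' ⊢
  refine hf.mul_bdd hu'.aestronglyMeasurable (c := max |u a| |u b|)
    (ae_restrict_of_forall_mem measurableSet_Ioc fun t ht => ?_)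
  have hta : t ∈ Icc a b := Ioc_subset_Icc_self ht
  exact abs_le_max_abs_abs (hu ⟨le_rfl, hab⟩ hta hta.1) (hu hta ⟨hab, le_rfl⟩ hta.2)

lemma mul_integral_lt_integral_mul_of_strictAntiOn {f g : ℝ → ℝ} {a b : ℝ} (hab : a < b)
    (hg : StrictAntiOn g (Icc a b)) (hf : ∀ t ∈ Ioo a b, 0 < f t)
    (hfi : IntervalIntegrable f volume a b)
    (hgfi : IntervalIntegrable (fun t => g t * f t) volume a b) :
    g b * ∫ t in a..b, f t < ∫ t in a..b, g t * f t := by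
  rw [← intervalIntegral.integral_const_mul, ← sub_pos, ← integral_sub hgfi (hfi.const_mul _)]
  refine intervalIntegral_pos_of_pos_on (hgfi.sub (hfi.const_mul _)) (fun t ht => ?_) hab
  have hgt : g b < g t := hg ⟨ht.1.le, ht.2.le⟩ ⟨hab.le, le_rfl⟩ ht.2
  simpa [← sub_mul] using mul_pos (sub_pos.2 hgt) (hf t ht)

lemma ConvexOn.pow_succ_le_mul_deriv_mul_integral_pow {s : ℝ → ℝ} {x : ℝ} (m : ℕ)
    (hs : ConvexOn ℝ (Ici 0) s) (hs0 : s 0 = 0) (hsnn : ∀ t ≥ 0, 0 ≤ s t)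
    (hsd : DifferentiableAt ℝ s x) (hx : 0 < x)
    (hint : IntervalIntegrable (fun t => s t ^ m) volume 0 x) :
    s x ^ (m + 1) ≤ (m + 1) * deriv s x * ∫ t in (0:ℝ)..x, s t ^ m := by
  set a := deriv s x
  have htangent : ∀ t ≥ 0, s x + a * (t - x) ≤ s t := fun t ht =>
    hs.add_deriv_mul_sub_le hx.le ht hsd
  have hsx : s x ≤ a * x := by linarith [htangent 0 le_rfl]
  have ha : 0 ≤ a := nonneg_of_mul_nonneg_left (hsx.trans' (hsnn x hx.le)) hx
  rcases ha.eq_or_lt with ha | ha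
  · have hsx0 : s x = 0 := le_antisymm (by simpa [← ha] using hsx) (hsnn x hx.le)
    simp [hsx0, ← ha]
  -- `c` is where the tangent line at `x` meets zero.
  set c := x - s x / a
  have hc : 0 ≤ c := sub_nonneg.2 ((div_le_iff₀ ha).2 (by linarith))
  have hcx : c ≤ x := sub_le_self _ (div_nonneg (hsnn x hx.le) ha.le)
  calc s x ^ (m + 1) = (m + 1) * a * ∫ t in c..x, (s x + a * (t - x)) ^ m := by
        rw [integral_add_mul_sub_pow ha.ne']
        field_simp
    _ ≤ (m + 1) * a * ∫ t in c..x, s t ^ m := by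
        gcongr
        refine integral_mono_on hcx ((by fun_prop : Continuous _).intervalIntegrable _ _)
          (hint.mono_set ?_) fun t ht => ?_
        · rw [uIcc_of_le hcx, uIcc_of_le hx.le]
          exact Icc_subset_Icc hc le_rfl
        · have hlin : 0 ≤ s x + a * (t - x) := by
            have h := sub_le_comm.1 ht.1
            rw [le_div_iff₀ ha] at h
            linarith
          exact pow_le_pow_left₀ hlin (htangent t (hc.trans ht.1)) m
    _ ≤ (m + 1) * a * ∫ t in (0:ℝ)..x, s t ^ m := by
        gcongr
        refine integral_mono_interval hc hcx le_rfl
          (ae_restrict_of_forall_mem measurableSet_Ioc fun t ht => ?_) hint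
        exact pow_nonneg (hsnn t ht.1.le) m

/-- If `g` is decreasing and positive, `s` is convex with `s(0)=0`, `s>0` on `(0,∞)`,
then for all `x > 0` and `n ≥ 2`:
`s'(x) ∫_0^x g(t) s(t)^{n-2} dt > g(x) s(x)^{n-1}/(n-1)`. -/
theorem stmt12 (n : ℕ) (hn : 2 ≤ n)
    (g s : ℝ → ℝ)
    (hg : StrictAntiOn g (Set.Ici 0)) (hgpos : ∀ t ≥ (0:ℝ), 0 < g t)
    (hs : ConvexOn ℝ (Set.Ici 0) s) (hs0 : s 0 = 0) (hspos : ∀ t > (0:ℝ), 0 < s t)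
    (hsd : ∀ t > (0:ℝ), DifferentiableAt ℝ s t)
    (x : ℝ) (hx : 0 < x) :
    deriv s x * ∫ t in (0:ℝ)..x, g t * s t ^ (n - 2) >
      g x * s x ^ (n - 1) / ((n : ℝ) - 1) := by
  obtain ⟨m, rfl⟩ : ∃ m, n = m + 2 := ⟨n - 2, by omega⟩
  have hsnn : ∀ t ≥ (0:ℝ), 0 ≤ s t := fun t ht =>
    ht.eq_or_lt.elim (fun h => h ▸ hs0.ge) fun h => (hspos t h).le
  have hmono : MonotoneOn (fun t => s t ^ m) (Icc 0 x) := fun t ht u hu htu =>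
    pow_le_pow_left₀ (hsnn t ht.1)
      (hs.monotoneOn_Ici (fun t ht => hs0.symm ▸ hsnn t ht) ht.1 hu.1 htu) m
  have hint : IntervalIntegrable (fun t => s t ^ m) volume 0 x :=
    MonotoneOn.intervalIntegrable (by rwa [uIcc_of_le hx.le])
  have hderiv : 0 < deriv s x := by
    have h := hs.slope_le_deriv self_mem_Ici hx.le hx (hsd x hx)
    rw [slope_def_field, hs0, sub_zero, sub_zero] at h
    exact (div_pos (hspos x hx) hx).trans_le h
  have hpow := hs.pow_succ_le_mul_deriv_mul_integral_pow m hs0 hsnn (hsd x hx) hx hint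
  have hweighted := mul_integral_lt_integral_mul_of_strictAntiOn hx (hg.mono Icc_subset_Ici_self)
    (fun t ht => pow_pos (hspos t ht.1) m) hint
    ((hg.antitoneOn.mono (uIcc_of_le hx.le ▸ Icc_subset_Ici_self)).intervalIntegrable
      |>.mul_monotoneOn hx.le hmono)
  have hcast : ((m + 2 : ℕ) : ℝ) - 1 = m + 1 := by push_cast; ring
  rw [show m + 2 - 2 = m by omega, show m + 2 - 1 = m + 1 by omega, hcast, gt_iff_lt,
    div_lt_iff₀ (by positivity)]
  calc g x * s x ^ (m + 1) ≤ g x * ((m + 1) * deriv s x * ∫ t in (0:ℝ)..x, s t ^ m) :=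
        mul_le_mul_of_nonneg_left hpow (hgpos x hx.le).le
    _ = (m + 1) * deriv s x * (g x * ∫ t in (0:ℝ)..x, s t ^ m) := by ring
    _ < (m + 1) * deriv s x * ∫ t in (0:ℝ)..x, g t * s t ^ m := by gcongr
    _ = _ := by ring
end

section
/- Let K be an origin-symmetric star body in the hemisphere S²₊ with radial function ρ_K : S¹ → (0, π/2]. Then ∫_{S¹} (2ρ_K(ξ))² dξ ≥ 8π·arccos²(1 − vol(K)/(2π)), where vol(K) = ∫_{S¹}(1 − cos ρ_K(u)) du, with equality if and only if ρ_K is constant. -/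
/-!
Put `A := arccos (1 - vol / (2π))`, so that `cos A` is the mean of `cos ρ`. Since `sin y / y` is
strictly decreasing on `(0, π)`, the function `y ↦ y² + (2A / sin A) cos y` decreases on `[0, A]`
and increases on `[A, π]`. Evaluating this at `y = ρ θ` and integrating, the cosine terms cancel
because of the choice of `A`, which leaves `∫ ρ² ≥ 2π A²`, with equality only if `ρ ≡ A`.
-/

open Real Set intervalIntegral

theorem mul_cos_lt_sin {x : ℝ} (hx₀ : 0 < x) (hxπ : x < π) : x * cos x < sin x := by
  have hsin : 0 < sin x := sin_pos_of_pos_of_lt_pi hx₀ hxπ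
  rcases lt_or_ge x (π / 2) with hx | hx
  · have hcos : 0 < cos x := cos_pos_of_mem_Ioo ⟨by linarith, hx⟩
    have htan := lt_tan hx₀ hx
    rwa [tan_eq_sin_div_cos, lt_div_iff₀ hcos] at htan
  · have hcos : cos x ≤ 0 := cos_nonpos_of_pi_div_two_le_of_le hx (by linarith)
    nlinarith

theorem strictAntiOn_sin_div_self : StrictAntiOn (fun x => sin x / x) (Ioo 0 π) := by
  apply strictAntiOn_of_deriv_neg (convex_Ioo 0 π)
    (continuousOn_sin.div continuousOn_id fun x hx => hx.1.ne')
  intro x hx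
  rw [interior_Ioo] at hx
  rw [((hasDerivAt_sin x).div (hasDerivAt_id x) hx.1.ne').deriv]
  have := mul_cos_lt_sin hx.1 hx.2
  exact div_neg_of_neg_of_pos (by simp only [id, mul_one]; linarith) (pow_pos hx.1 2)

theorem sq_add_mul_cos_lt {A x : ℝ} (hA : A ∈ Ioo 0 π) (hx : x ∈ Icc 0 π) (hne : x ≠ A) :
    A ^ 2 + 2 * A / sin A * cos A < x ^ 2 + 2 * A / sin A * cos x := by
  have hsinA : 0 < sin A := sin_pos_of_pos_of_lt_pi hA.1 hA.2
  set g : ℝ → ℝ := fun y => y ^ 2 + 2 * A / sin A * cos y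
  have hg : Continuous g := by fun_prop
  have hderiv (y : ℝ) : HasDerivAt g (2 * y - 2 * A / sin A * sin y) y := by
    refine ((hasDerivAt_pow 2 y).add ((hasDerivAt_cos y).const_mul _)).congr_deriv ?_
    norm_num
    ring
  -- `g'` has the sign of `y - A` because `sin y / y` is decreasing
  have hderiv_factor {y : ℝ} (hy : 0 < y) :
      deriv g y = 2 * y * A / sin A * (sin A / A - sin y / y) := by
    rw [(hderiv y).deriv]
    have := hA.1.ne'
    field_simp
  have hfactor_pos {y : ℝ} (hy : y ∈ Ioo 0 π) : 0 < 2 * y * A / sin A := by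
    have := hy.1; have := hA.1; positivity
  rcases hne.lt_or_gt with hlt | hgt
  · have hanti : StrictAntiOn g (Icc 0 A) := by
      refine strictAntiOn_of_deriv_neg (convex_Icc 0 A) hg.continuousOn fun y hy => ?_
      rw [interior_Icc] at hy
      have hyπ : y ∈ Ioo 0 π := ⟨hy.1, hy.2.trans hA.2⟩
      rw [hderiv_factor hy.1]
      exact mul_neg_of_pos_of_neg (hfactor_pos hyπ)
        (sub_neg.2 (strictAntiOn_sin_div_self hyπ hA hy.2))
    exact hanti ⟨hx.1, hlt.le⟩ ⟨hA.1.le, le_rfl⟩ hlt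
  · have hmono : StrictMonoOn g (Icc A π) := by
      refine strictMonoOn_of_deriv_pos (convex_Icc A π) hg.continuousOn fun y hy => ?_
      rw [interior_Icc] at hy
      have hyπ : y ∈ Ioo 0 π := ⟨hA.1.trans hy.1, hy.2⟩
      rw [hderiv_factor hyπ.1]
      exact mul_pos (hfactor_pos hyπ) (sub_pos.2 (strictAntiOn_sin_div_self hA hyπ hy.1))
    exact hmono ⟨le_rfl, hA.2.le⟩ ⟨hgt.le, hx.2⟩ hgt

theorem sq_add_mul_cos_le {A x : ℝ} (hA : A ∈ Ioo 0 π) (hx : x ∈ Icc 0 π) :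
    A ^ 2 + 2 * A / sin A * cos A ≤ x ^ 2 + 2 * A / sin A * cos x := by
  rcases eq_or_ne x A with rfl | hne
  · exact le_rfl
  · exact (sq_add_mul_cos_lt hA hx hne).le

section IntervalIntegral

variable {f : ℝ → ℝ} {a b A : ℝ}

theorem abs_integral_cos_div_lt_one (hab : a < b) (hf : ContinuousOn f (Icc a b))
    (hfπ : ∀ x ∈ Icc a b, f x ∈ Ioo 0 π) : |(∫ x in a..b, cos (f x)) / (b - a)| < 1 := by
  have hcos : ContinuousOn (fun x => cos (f x)) (Icc a b) := continuous_cos.comp_continuousOn hf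
  have ha : a ∈ Icc a b := ⟨le_rfl, hab.le⟩
  have hlt_one {x} (hx : x ∈ Icc a b) : cos (f x) < 1 := by
    simpa using strictAntiOn_cos ⟨le_rfl, pi_pos.le⟩ (Ioo_subset_Icc_self (hfπ x hx)) (hfπ x hx).1
  have hneg_one_lt {x} (hx : x ∈ Icc a b) : -1 < cos (f x) := by
    simpa using strictAntiOn_cos (Ioo_subset_Icc_self (hfπ x hx)) ⟨pi_pos.le, le_rfl⟩ (hfπ x hx).2
  rw [abs_div, abs_of_pos (sub_pos.2 hab), div_lt_one (sub_pos.2 hab), abs_lt]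
  constructor
  · have := integral_lt_integral_of_continuousOn_of_le_of_exists_lt hab continuousOn_const hcos
      (fun x hx => (hneg_one_lt (Ioc_subset_Icc_self hx)).le) ⟨a, ha, hneg_one_lt ha⟩
    simpa using this
  · have := integral_lt_integral_of_continuousOn_of_le_of_exists_lt hab hcos continuousOn_const
      (fun x hx => (hlt_one (Ioc_subset_Icc_self hx)).le) ⟨a, ha, hlt_one ha⟩
    simpa using this

theorem arccos_integral_cos_div_mem_Ioo (hab : a < b) (hf : ContinuousOn f (Icc a b))
    (hfπ : ∀ x ∈ Icc a b, f x ∈ Ioo 0 π) :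
    arccos ((∫ x in a..b, cos (f x)) / (b - a)) ∈ Ioo 0 π :=
  have h := abs_lt.1 (abs_integral_cos_div_lt_one hab hf hfπ)
  ⟨arccos_pos.2 h.2, arccos_lt_pi.2 h.1⟩

theorem integral_cos_eq_mul_cos_arccos (hab : a < b) (hf : ContinuousOn f (Icc a b))
    (hfπ : ∀ x ∈ Icc a b, f x ∈ Ioo 0 π) :
    ∫ x in a..b, cos (f x) = (b - a) * cos (arccos ((∫ x in a..b, cos (f x)) / (b - a))) := by
  have h := abs_le.1 (abs_integral_cos_div_lt_one hab hf hfπ).le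
  rw [cos_arccos h.1 h.2, mul_div_cancel₀ _ (sub_pos.2 hab).ne']

theorem integral_sq_eq_of_integral_cos (hab : a ≤ b) (hf : ContinuousOn f (Icc a b)) (c : ℝ)
    (hcos : ∫ x in a..b, cos (f x) = (b - a) * cos A) :
    ∫ x in a..b, f x ^ 2 =
      (b - a) * A ^ 2 + ∫ x in a..b, (f x ^ 2 + c * cos (f x) - (A ^ 2 + c * cos A)) := by
  rw [← uIcc_of_le hab] at hf
  have hsq : IntervalIntegrable (fun x => f x ^ 2) MeasureTheory.volume a b :=
    (hf.pow 2).intervalIntegrable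
  have hcos' : IntervalIntegrable (fun x => c * cos (f x)) MeasureTheory.volume a b :=
    ((continuous_cos.comp_continuousOn hf).intervalIntegrable).const_mul c
  rw [integral_sub (hsq.add hcos') intervalIntegrable_const, integral_add hsq hcos',
    integral_const_mul, hcos, integral_const, smul_eq_mul]
  ring

theorem mul_sq_le_integral_sq (hab : a ≤ b) (hf : ContinuousOn f (Icc a b))
    (hfπ : ∀ x ∈ Icc a b, f x ∈ Icc 0 π) (hA : A ∈ Ioo 0 π)
    (hcos : ∫ x in a..b, cos (f x) = (b - a) * cos A) :
    (b - a) * A ^ 2 ≤ ∫ x in a..b, f x ^ 2 := by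
  rw [integral_sq_eq_of_integral_cos hab hf (2 * A / sin A) hcos, le_add_iff_nonneg_right]
  exact integral_nonneg hab fun x hx => sub_nonneg.2 (sq_add_mul_cos_le hA (hfπ x hx))

theorem mul_sq_lt_integral_sq (hab : a < b) (hf : ContinuousOn f (Icc a b))
    (hfπ : ∀ x ∈ Icc a b, f x ∈ Icc 0 π) (hA : A ∈ Ioo 0 π)
    (hcos : ∫ x in a..b, cos (f x) = (b - a) * cos A) (hne : ∃ x ∈ Icc a b, f x ≠ A) :
    (b - a) * A ^ 2 < ∫ x in a..b, f x ^ 2 := by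
  obtain ⟨x₀, hx₀, hfx₀⟩ := hne
  rw [integral_sq_eq_of_integral_cos hab.le hf (2 * A / sin A) hcos, lt_add_iff_pos_right]
  have hdefect : ContinuousOn
      (fun x => f x ^ 2 + 2 * A / sin A * cos (f x) - (A ^ 2 + 2 * A / sin A * cos A)) (Icc a b) :=
    ((hf.pow 2).add (continuousOn_const.mul (continuous_cos.comp_continuousOn hf))).sub
      continuousOn_const
  simpa using integral_lt_integral_of_continuousOn_of_le_of_exists_lt hab continuousOn_const
    hdefect (fun x hx => sub_nonneg.2 (sq_add_mul_cos_le hA (hfπ x (Ioc_subset_Icc_self hx))))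
    ⟨x₀, hx₀, sub_pos.2 (sq_add_mul_cos_lt hA (hfπ x₀ hx₀) hfx₀)⟩

theorem integral_sq_eq_mul_sq_iff (hab : a < b) (hf : ContinuousOn f (Icc a b))
    (hfπ : ∀ x ∈ Icc a b, f x ∈ Icc 0 π) (hA : A ∈ Ioo 0 π)
    (hcos : ∫ x in a..b, cos (f x) = (b - a) * cos A) :
    ∫ x in a..b, f x ^ 2 = (b - a) * A ^ 2 ↔ ∀ x ∈ Icc a b, f x = A := by
  refine ⟨fun heq => ?_, fun hconst => ?_⟩
  · by_contra! hne
    exact (mul_sq_lt_integral_sq hab hf hfπ hA hcos hne).ne' heq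
  · rw [integral_congr (g := fun _ => A ^ 2) fun x hx => by
      simp only [hconst x (uIcc_of_le hab.le ▸ hx)], integral_const, smul_eq_mul]

end IntervalIntegral

/-- For an origin-symmetric star body in `S²₊` with radial function `ρ : S¹ → (0, π/2]`
(modeled as a continuous `π`-periodic function on `ℝ`, the circle parametrized by angle),
`∫_{S¹} (2ρ)² ≥ 8π·arccos²(1 − vol(K)/(2π))` where `vol(K) = ∫_{S¹}(1 − cos ρ)`,
with equality iff `ρ` is constant (i.e. `K` is a centered ball). -/
theorem stmt14 (ρ : ℝ → ℝ) (hρc : Continuous ρ)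
    (hρr : ∀ θ, ρ θ ∈ Set.Ioc 0 (π / 2))
    (hsym : ∀ θ, ρ (θ + π) = ρ θ)
    (vol : ℝ) (hvol : vol = ∫ θ in (0:ℝ)..(2 * π), (1 - Real.cos (ρ θ))) :
    (∫ θ in (0:ℝ)..(2 * π), (2 * ρ θ) ^ 2) ≥
        8 * π * (Real.arccos (1 - vol / (2 * π))) ^ 2 ∧
      ((∫ θ in (0:ℝ)..(2 * π), (2 * ρ θ) ^ 2) =
          8 * π * (Real.arccos (1 - vol / (2 * π))) ^ 2 ↔ ∃ c, ∀ θ, ρ θ = c) := by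
  have hπ := pi_pos
  have h2π : (0 : ℝ) < 2 * π := by positivity
  have hρc' : ContinuousOn ρ (Icc 0 (2 * π)) := hρc.continuousOn
  have hρπ : ∀ θ ∈ Icc 0 (2 * π), ρ θ ∈ Ioo 0 π :=
    fun θ _ => ⟨(hρr θ).1, by linarith [(hρr θ).2]⟩
  have hmean : 1 - vol / (2 * π) = (∫ θ in (0 : ℝ)..2 * π, cos (ρ θ)) / (2 * π - 0) := by
    have hint : IntervalIntegrable (fun θ => cos (ρ θ)) MeasureTheory.volume 0 (2 * π) :=
      (continuous_cos.comp hρc).intervalIntegrable _ _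
    rw [hvol, integral_sub intervalIntegrable_const hint, integral_const, smul_eq_mul]
    field_simp
    ring
  have hsq : ∫ θ in (0 : ℝ)..2 * π, (2 * ρ θ) ^ 2 = 4 * ∫ θ in (0 : ℝ)..2 * π, ρ θ ^ 2 := by
    simp only [mul_pow, integral_const_mul]
    norm_num
  rw [hmean, hsq, show ∀ y : ℝ, 8 * π * y ^ 2 = 4 * ((2 * π - 0) * y ^ 2) by intro; ring,
    ge_iff_le, mul_le_mul_iff_right₀ four_pos, mul_right_inj' four_ne_zero]
  set A := arccos ((∫ θ in (0 : ℝ)..2 * π, cos (ρ θ)) / (2 * π - 0))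
  have hA := arccos_integral_cos_div_mem_Ioo h2π hρc' hρπ
  have hcos := integral_cos_eq_mul_cos_arccos h2π hρc' hρπ
  have hρπ' : ∀ θ ∈ Icc 0 (2 * π), ρ θ ∈ Icc 0 π := fun θ hθ => Ioo_subset_Icc_self (hρπ θ hθ)
  rw [integral_sq_eq_mul_sq_iff h2π hρc' hρπ' hA hcos]
  refine ⟨mul_sq_le_integral_sq h2π.le hρc' hρπ' hA hcos, fun hconst => ⟨A, fun θ => ?_⟩, ?_⟩
  · have hper : Function.Periodic ρ π := hsym
    obtain ⟨θ', hθ', hρθ'⟩ := hper.exists_mem_Ico₀ hπ θ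
    exact hρθ' ▸ hconst θ' ⟨hθ'.1, by linarith [hθ'.2]⟩
  · rintro ⟨k, hk⟩ θ -
    have hk₀ : k ∈ Ioc 0 (π / 2) := hk 0 ▸ hρr 0
    simp only [hk, integral_const, smul_eq_mul]
    rw [mul_div_cancel_left₀ _ (by positivity), arccos_cos hk₀.1.le (by linarith [hk₀.2])]
end

section
/- Let ρ : S¹ → [0, π/2] be a measurable even function (radial function of an origin-symmetric star-shaped set K in S²₊). Then 4∫_{S¹} ρ(u)² du ≤ π² ∫_{S¹} (1 − cos ρ(u)) du, with equality if and only if ρ(u) ∈ {0, π/2} for almost every u. -/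
/-!
Writing `1 - cos x = 2 sin² (x / 2)`, the inequality `4 x² ≤ π² (1 - cos x)` on `[0, π/2]` says
that `sin` lies above its chord from `0` to `π/4`, which holds by concavity of `sin` on `[0, π]`,
strictly in the interior. Integrating this pointwise inequality gives the theorem, and equality of
the integrals forces pointwise equality almost everywhere, i.e. `ρ ∈ {0, π/2}` a.e.
-/

open Real MeasureTheory

namespace Real

lemma mul_sin_le_sin_mul {t a : ℝ} (ht₀ : 0 ≤ t) (ht₁ : t ≤ 1) (ha₀ : 0 ≤ a) (ha : a ≤ π) :
    t * sin a ≤ sin (t * a) := by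
  simpa using strictConcaveOn_sin_Icc.concaveOn.2 ⟨le_rfl, pi_pos.le⟩ ⟨ha₀, ha⟩
    (sub_nonneg.2 ht₁) ht₀ (sub_add_cancel 1 t)

lemma mul_sin_lt_sin_mul {t a : ℝ} (ht₀ : 0 < t) (ht₁ : t < 1) (ha₀ : 0 < a) (ha : a ≤ π) :
    t * sin a < sin (t * a) := by
  simpa using strictConcaveOn_sin_Icc.2 ⟨le_rfl, pi_pos.le⟩ ⟨ha₀.le, ha⟩ ha₀.ne
    (sub_pos.2 ht₁) ht₀ (sub_add_cancel 1 t)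

lemma one_sub_cos_eq_two_mul_sin_half_sq (x : ℝ) : 1 - cos x = 2 * sin (x / 2) ^ 2 := by
  rw [sin_sq_eq_half_sub, mul_div_cancel₀ x two_ne_zero]
  ring

lemma sqrt_two_mul_div_pi_le_sin_half {x : ℝ} (hx₀ : 0 ≤ x) (hx : x ≤ π / 2) :
    sqrt 2 * x / π ≤ sin (x / 2) :=
  calc sqrt 2 * x / π = 2 * x / π * sin (π / 4) := by rw [sin_pi_div_four]; ring
    _ ≤ sin (2 * x / π * (π / 4)) :=
      mul_sin_le_sin_mul (by positivity) (by rw [div_le_one pi_pos]; linarith) (by positivity)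
        (by linarith [pi_pos])
    _ = sin (x / 2) := by congr 1; field_simp; ring

lemma sqrt_two_mul_div_pi_lt_sin_half {x : ℝ} (hx₀ : 0 < x) (hx : x < π / 2) :
    sqrt 2 * x / π < sin (x / 2) :=
  calc sqrt 2 * x / π = 2 * x / π * sin (π / 4) := by rw [sin_pi_div_four]; ring
    _ < sin (2 * x / π * (π / 4)) :=
      mul_sin_lt_sin_mul (by positivity) (by rw [div_lt_one pi_pos]; linarith) (by positivity)
        (by linarith [pi_pos])
    _ = sin (x / 2) := by congr 1; field_simp; ring

lemma four_mul_sq_le_pi_sq_mul_one_sub_cos {x : ℝ} (hx₀ : 0 ≤ x) (hx : x ≤ π / 2) :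
    4 * x ^ 2 ≤ π ^ 2 * (1 - cos x) := by
  have hsq := pow_le_pow_left₀ (by positivity) (sqrt_two_mul_div_pi_le_sin_half hx₀ hx) 2
  rw [div_pow, mul_pow, sq_sqrt zero_le_two, div_le_iff₀ (by positivity)] at hsq
  rw [one_sub_cos_eq_two_mul_sin_half_sq]
  linarith

lemma four_mul_sq_lt_pi_sq_mul_one_sub_cos {x : ℝ} (hx₀ : 0 < x) (hx : x < π / 2) :
    4 * x ^ 2 < π ^ 2 * (1 - cos x) := by
  have hsq := pow_lt_pow_left₀ (sqrt_two_mul_div_pi_lt_sin_half hx₀ hx) (by positivity) two_ne_zero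
  rw [div_pow, mul_pow, sq_sqrt zero_le_two, div_lt_iff₀ (by positivity)] at hsq
  rw [one_sub_cos_eq_two_mul_sin_half_sq]
  linarith

lemma four_mul_sq_eq_pi_sq_mul_one_sub_cos_iff {x : ℝ} (hx₀ : 0 ≤ x) (hx : x ≤ π / 2) :
    4 * x ^ 2 = π ^ 2 * (1 - cos x) ↔ x = 0 ∨ x = π / 2 := by
  refine ⟨fun h ↦ ?_, ?_⟩
  · by_contra! hne
    exact (four_mul_sq_lt_pi_sq_mul_one_sub_cos (hx₀.lt_of_ne' hne.1) (hx.lt_of_ne hne.2)).ne h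
  · rintro (rfl | rfl)
    · simp
    · rw [cos_pi_div_two]
      ring

end Real

lemma MeasureTheory.Integrable.continuous_comp_of_mapsTo_isCompact {α : Type*}
    [MeasurableSpace α] {μ : Measure α} [IsFiniteMeasure μ] {g : ℝ → ℝ} (hg : Continuous g)
    {f : α → ℝ} (hf : Measurable f) {K : Set ℝ} (hK : IsCompact K) (hfK : ∀ a, f a ∈ K) :
    Integrable (fun a ↦ g (f a)) μ := by
  obtain ⟨C, hC⟩ := hK.exists_bound_of_continuousOn hg.continuousOn
  exact .of_bound (hg.measurable.comp hf).aestronglyMeasurable C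
    (.of_forall fun a ↦ hC _ (hfK a))

theorem stmt15_general (ρ : ℝ → ℝ) (hρm : Measurable ρ)
    (hρr : ∀ θ, ρ θ ∈ Set.Icc 0 (π / 2)) :
    4 * (∫ θ in (0:ℝ)..(2 * π), (ρ θ) ^ 2) ≤
        π ^ 2 * ∫ θ in (0:ℝ)..(2 * π), (1 - Real.cos (ρ θ)) ∧
      (4 * (∫ θ in (0:ℝ)..(2 * π), (ρ θ) ^ 2) =
          π ^ 2 * ∫ θ in (0:ℝ)..(2 * π), (1 - Real.cos (ρ θ)) ↔
        ∀ᵐ θ ∂(volume.restrict (Set.Ioc 0 (2 * π))), ρ θ = 0 ∨ ρ θ = π / 2) := by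
  have h2π : (0:ℝ) ≤ 2 * π := by positivity
  have hint (g : ℝ → ℝ) (hg : Continuous g) :
      Integrable (fun θ ↦ g (ρ θ)) (volume.restrict (Set.Ioc 0 (2 * π))) :=
    .continuous_comp_of_mapsTo_isCompact hg hρm isCompact_Icc hρr
  have hlhs := hint (fun x ↦ 4 * x ^ 2) (by fun_prop)
  have hrhs := hint (fun x ↦ π ^ 2 * (1 - cos x)) (by fun_prop)
  have hle : (fun θ ↦ 4 * ρ θ ^ 2) ≤ fun θ ↦ π ^ 2 * (1 - cos (ρ θ)) := fun θ ↦
    four_mul_sq_le_pi_sq_mul_one_sub_cos (hρr θ).1 (hρr θ).2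
  simp only [intervalIntegral.integral_of_le h2π, ← integral_const_mul]
  refine ⟨integral_mono hlhs hrhs hle, ?_⟩
  rw [integral_eq_iff_of_ae_le hlhs hrhs (.of_forall hle)]
  refine Filter.eventually_congr (.of_forall fun θ ↦ ?_)
  exact four_mul_sq_eq_pi_sq_mul_one_sub_cos_iff (hρr θ).1 (hρr θ).2

/-- For a measurable even radial function `ρ : S¹ → [0, π/2]` (modeled as a measurable
`π`-periodic function on `ℝ`), `4∫_{S¹} ρ² ≤ π² ∫_{S¹} (1 − cos ρ)`, with equality iff
`ρ ∈ {0, π/2}` almost everywhere (i.e. `K` is a spherical cone). -/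
theorem stmt15 (ρ : ℝ → ℝ) (hρm : Measurable ρ)
    (hρr : ∀ θ, ρ θ ∈ Set.Icc 0 (π / 2))
    (hsym : ∀ θ, ρ (θ + π) = ρ θ) :
    4 * (∫ θ in (0:ℝ)..(2 * π), (ρ θ) ^ 2) ≤
        π ^ 2 * ∫ θ in (0:ℝ)..(2 * π), (1 - Real.cos (ρ θ)) ∧
      (4 * (∫ θ in (0:ℝ)..(2 * π), (ρ θ) ^ 2) =
          π ^ 2 * ∫ θ in (0:ℝ)..(2 * π), (1 - Real.cos (ρ θ)) ↔
        ∀ᵐ θ ∂(volume.restrict (Set.Ioc 0 (2 * π))), ρ θ = 0 ∨ ρ θ = π / 2) :=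
  stmt15_general ρ hρm hρr
end

section
/- For an origin-symmetric lune K in S²₊ with half-width w ∈ (0, π/2) (so vol(K) = 4w and tan ρ_K(x) = tan(w)/|⟨x,u⟩| for a fixed u ∈ S¹), one has ∫_{S¹} vol(K ∩ ξ^⊥)² dξ = 16 ∫_0^{π/2} arctan²(tan(w)/cos θ) dθ. -/
/-!
Off the null set `{cos θ = 0}` the integrand is a function of `|cos θ|`, which is `π`-periodic
and symmetric under `θ ↦ π - θ`, so the integral over the circle is four times the integral over
a quarter circle, where `|cos θ| = cos θ`.
-/

open Real MeasureTheory

theorem Function.Periodic.intervalIntegral_zero_two_mul {f : ℝ → ℝ} {T : ℝ}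
    (hf : Function.Periodic f T) (hint : IntervalIntegrable f volume 0 T) :
    ∫ x in (0:ℝ)..2 * T, f x = 2 * ∫ x in (0:ℝ)..T, f x := by
  have hshift : ∫ x in T..T + T, f x = ∫ x in (0:ℝ)..T, f x := by
    simpa using hf.intervalIntegral_add_eq T 0
  rw [two_mul, ← intervalIntegral.integral_add_adjacent_intervals (b := T) hint
    (by simpa [hf.sub_eq] using hint.comp_sub_right T), hshift, two_mul]

theorem intervalIntegral_zero_eq_two_mul_of_reflect {f : ℝ → ℝ} {T : ℝ}
    (hf : ∀ x, f (T - x) = f x) (hint : IntervalIntegrable f volume 0 T) :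
    ∫ x in (0:ℝ)..T, f x = 2 * ∫ x in (0:ℝ)..T / 2, f x := by
  have hreflect : ∫ x in T / 2..T, f x = ∫ x in (0:ℝ)..T / 2, f x := by
    have := intervalIntegral.integral_comp_sub_left (a := 0) (b := T / 2) f T
    simp only [hf, sub_zero, show T - T / 2 = T / 2 by ring] at this
    exact this.symm
  have hmid : T / 2 ∈ Set.uIcc 0 T := by
    rcases le_total 0 T with h | h
    · exact Set.mem_uIcc.2 (Or.inl ⟨by linarith, by linarith⟩)
    · exact Set.mem_uIcc.2 (Or.inr ⟨by linarith, by linarith⟩)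
  rw [← intervalIntegral.integral_add_adjacent_intervals (b := T / 2)
    (hint.mono_set (Set.uIcc_subset_uIcc Set.left_mem_uIcc hmid))
    (hint.mono_set (Set.uIcc_subset_uIcc hmid Set.right_mem_uIcc)), hreflect, two_mul]

theorem integral_comp_abs_cos (g : ℝ → ℝ)
    (hg : IntervalIntegrable (fun θ => g |cos θ|) volume 0 π) :
    ∫ θ in (0:ℝ)..2 * π, g |cos θ| = 4 * ∫ θ in (0:ℝ)..π / 2, g (cos θ) := by
  have hper : Function.Periodic (fun θ => g |cos θ|) π := fun θ => by
    simp only [cos_add_pi, abs_neg]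
  have hreflect : ∀ θ, g |cos (π - θ)| = g |cos θ| := fun θ => by
    simp only [cos_pi_sub, abs_neg]
  have hquarter : ∫ θ in (0:ℝ)..π / 2, g |cos θ| = ∫ θ in (0:ℝ)..π / 2, g (cos θ) := by
    refine intervalIntegral.integral_congr fun θ hθ => ?_
    rw [Set.uIcc_of_le (by positivity)] at hθ
    rw [abs_of_nonneg (cos_nonneg_of_mem_Icc ⟨by linarith [hθ.1, pi_pos], hθ.2⟩)]
  rw [hper.intervalIntegral_zero_two_mul hg,
    intervalIntegral_zero_eq_two_mul_of_reflect hreflect hg, hquarter]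
  ring

theorem volume_setOf_cos_eq_zero : volume {θ : ℝ | cos θ = 0} = 0 := by
  refine measure_mono_null (fun θ hθ => ?_)
    ((Set.countable_range fun k : ℤ => (2 * (k : ℝ) + 1) * π / 2).measure_zero _)
  obtain ⟨k, hk⟩ := cos_eq_zero_iff.mp hθ
  exact ⟨k, hk.symm⟩

theorem intervalIntegrable_arctan_sq {f : ℝ → ℝ} (hf : Measurable f) (a b : ℝ) :
    IntervalIntegrable (fun x => arctan (f x) ^ 2) volume a b := by
  refine (intervalIntegrable_const (c := (π / 2) ^ 2)).mono_fun'
    ((measurable_arctan.comp hf).pow_const 2).aestronglyMeasurable (ae_of_all _ fun x => ?_)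
  simpa only [norm_pow, Real.norm_eq_abs, sq_abs] using
    sq_le_sq' (neg_pi_div_two_lt_arctan (f x)).le (arctan_lt_pi_div_two (f x)).le

theorem stmt16_general (w : ℝ)
    (ρ : ℝ → ℝ)
    (hρ : ∀ θ, ρ θ = if Real.cos θ = 0 then π / 2
      else Real.arctan (Real.tan w / |Real.cos θ|)) :
    (∫ θ in (0:ℝ)..(2 * π), (2 * ρ θ) ^ 2) =
      16 * ∫ θ in (0:ℝ)..(π / 2), (Real.arctan (Real.tan w / Real.cos θ)) ^ 2 := by
  have hρ_ae : ∀ᵐ θ, θ ∈ Set.uIoc 0 (2 * π) →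
      (2 * ρ θ) ^ 2 = 4 * arctan (tan w / |cos θ|) ^ 2 := by
    filter_upwards [measure_eq_zero_iff_ae_notMem.mp volume_setOf_cos_eq_zero] with θ hθ _
    rw [hρ, if_neg hθ]
    ring
  rw [intervalIntegral.integral_congr_ae hρ_ae, intervalIntegral.integral_const_mul,
    integral_comp_abs_cos (fun x => arctan (tan w / x) ^ 2)
      (intervalIntegrable_arctan_sq (measurable_const.div continuous_cos.measurable.abs) _ _)]
  ring

/-- For an origin-symmetric lune in `S²₊` with half-width `w ∈ (0, π/2)`, whose radial
function satisfies `tan ρ(θ) = tan w / |cos θ|` (the axis direction taken as angle `0`),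
`∫_{S¹} (2ρ(θ))² dθ = 16 ∫_0^{π/2} arctan²(tan w / cos θ) dθ`. -/
theorem stmt16 (w : ℝ) (hw : w ∈ Set.Ioo 0 (π / 2))
    (ρ : ℝ → ℝ)
    (hρ : ∀ θ, ρ θ = if Real.cos θ = 0 then π / 2
      else Real.arctan (Real.tan w / |Real.cos θ|)) :
    (∫ θ in (0:ℝ)..(2 * π), (2 * ρ θ) ^ 2) =
      16 * ∫ θ in (0:ℝ)..(π / 2), (Real.arctan (Real.tan w / Real.cos θ)) ^ 2 :=
  stmt16_general w ρ hρ
end
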